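/- If V : [0,∞) → ℝ is differentiable, nonnegative, and satisfies V'(t) ≤ -τ₁·V(t) + τ₂·√(V(t)) for all t with τ₁, τ₂ > 0, then √(V(t)) ≤ √(V(0)) + τ₂/τ₁ for all t ≥ 0. -/
import Mathlib


theorem lyapunov_sqrt_bound (τ₁ τ₂ : ℝ) (hτ₁ : 0 < τ₁) (hτ₂ : 0 < τ₂)
    (V V' : ℝ → ℝ)
    (hderiv : ∀ t ≥ (0 : ℝ), HasDerivAt V (V' t) t)
    (hnn : ∀ t ≥ (0 : ℝ), 0 ≤ V t)
    (hineq : ∀ t ≥ (0 : ℝ), V' t ≤ -τ₁ * V t + τ₂ * Real.sqrt (V t)) :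
    ∀ t ≥ (0 : ℝ), Real.sqrt (V t) ≤ Real.sqrt (V 0) + τ₂ / τ₁ := by
  set M : ℝ := (Real.sqrt (V 0) + τ₂ / τ₁) ^ 2 with hM
  have hs0 : (0:ℝ) ≤ Real.sqrt (V 0) := Real.sqrt_nonneg _
  have hratio : (0:ℝ) < τ₂ / τ₁ := div_pos hτ₂ hτ₁
  have hMτ : (τ₂ / τ₁) ^ 2 ≤ M := by
    apply pow_le_pow_left₀ (le_of_lt hratio); linarith
  have hV0M : V 0 ≤ M := by
    have : V 0 = Real.sqrt (V 0) ^ 2 := (Real.sq_sqrt (hnn 0 le_rfl)).symm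
    rw [this]
    apply pow_le_pow_left₀ hs0; linarith
  -- main claim: V t ≤ M for all t ≥ 0
  have key : ∀ t ≥ (0:ℝ), V t ≤ M := by
    intro t₀ ht₀
    by_contra hcon
    push_neg at hcon
    have ht₀pos : 0 < t₀ := by
      rcases lt_or_eq_of_le ht₀ with h | h
      · exact h
      · exfalso; rw [← h] at hcon; linarith
    set S : Set ℝ := {t | t ∈ Set.Icc (0:ℝ) t₀ ∧ V t ≤ M} with hS
    have h0S : (0:ℝ) ∈ S := ⟨⟨le_rfl, le_of_lt ht₀pos⟩, hV0M⟩
    have hSne : S.Nonempty := ⟨0, h0S⟩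
    have hSbdd : BddAbove S := ⟨t₀, fun x hx => hx.1.2⟩
    have hcontOn : ContinuousOn V (Set.Icc 0 t₀) := fun x hx =>
      ((hderiv x hx.1).continuousAt).continuousWithinAt
    have hSclosed : IsClosed S := by
      have : S = Set.Icc (0:ℝ) t₀ ∩ V ⁻¹' Set.Iic M := by
        ext x; simp [hS, Set.mem_Icc, and_assoc]
      rw [this]
      exact hcontOn.preimage_isClosed_of_isClosed isClosed_Icc isClosed_Iic
    set s := sSup S with hsdef
    have hsS : s ∈ S := hSclosed.csSup_mem hSne hSbdd
    obtain ⟨⟨hs0', hst₀⟩, hVsM⟩ := hsS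
    have hslt : s < t₀ := lt_of_le_of_ne hst₀ (fun h => by rw [h] at hVsM; linarith)
    have hgt : ∀ t, s < t → t ≤ t₀ → M < V t := by
      intro t hst htt₀
      by_contra h
      push_neg at h
      have : t ∈ S := ⟨⟨le_trans hs0' (le_of_lt hst), htt₀⟩, h⟩
      have := le_csSup hSbdd this
      linarith
    -- V is antitone on [s, t₀]
    have hanti : AntitoneOn V (Set.Icc s t₀) := by
      have hint : interior (Set.Icc s t₀) = Set.Ioo s t₀ := interior_Icc
      apply antitoneOn_of_deriv_nonpos (convex_Icc s t₀)
      · exact fun x hx => ((hderiv x (le_trans hs0' hx.1)).continuousAt).continuousWithinAt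
      · rw [hint]
        exact fun x hx => ((hderiv x (le_trans hs0' (le_of_lt hx.1))).differentiableAt).differentiableWithinAt
      · rw [hint]
        intro x hx
        have hx0 : (0:ℝ) ≤ x := le_trans hs0' (le_of_lt hx.1)
        rw [(hderiv x hx0).deriv]
        have hVx : M < V x := hgt x hx.1 (le_of_lt hx.2)
        have hVxnn : 0 ≤ V x := hnn x hx0
        have hsq : Real.sqrt (V x) ^ 2 = V x := Real.sq_sqrt hVxnn
        have hsqrtge : τ₂ / τ₁ ≤ Real.sqrt (V x) := by
          have h1 : Real.sqrt ((τ₂/τ₁)^2) ≤ Real.sqrt (V x) := by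
            apply Real.sqrt_le_sqrt; linarith
          rwa [Real.sqrt_sq (le_of_lt hratio)] at h1
        have := hineq x hx0
        have hτ : τ₂ ≤ τ₁ * Real.sqrt (V x) := by
          rw [div_le_iff₀ hτ₁] at hsqrtge; linarith
        nlinarith [Real.sqrt_nonneg (V x)]
    have := hanti ⟨le_rfl, le_of_lt hslt⟩ ⟨le_of_lt hslt, le_rfl⟩ (le_of_lt hslt)
    linarith
  intro t ht
  have h1 : Real.sqrt (V t) ≤ Real.sqrt M := Real.sqrt_le_sqrt (key t ht)
  rwa [hM, Real.sqrt_sq (by linarith)] at h1
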